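/- arXiv:2208.11851 — 6 statements merged into one kernel-verified Lean document; each statement's English description precedes it below -/
import Mathlib

section
/- For every pair of subsets X, Y of U there exists a subset Z of U with R₋(Z) = R₋(X) ∩ R₋(Y) and R⁻(Z) = R⁻(X) ∩ R⁻(Y); consequently the pair (R₋(X) ∩ R₋(Y), R⁻(X) ∩ R⁻(Y)) belongs to T and is the greatest lower bound of RS(X) and RS(Y) in T. -/
/-- Lower approximation: `R₋(X) = {x ∈ U | [x]_R ⊆ X}`. -/
def lowerApprox {U : Type*} (R : Setoid U) (X : Set U) : Set U :=
  {x | {y | R.r x y} ⊆ X}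

/-- Upper approximation: `R⁻(X) = {x ∈ U | [x]_R ∩ X ≠ ∅}`. -/
def upperApprox {U : Type*} (R : Setoid U) (X : Set U) : Set U :=
  {x | ({y | R.r x y} ∩ X) ≠ ∅}

/-- Rough set `RS(X) = (R₋(X), R⁻(X))`. -/
def RS {U : Type*} (R : Setoid U) (X : Set U) : Set U × Set U :=
  (lowerApprox R X, upperApprox R X)

/-- `T = {RS(X) | X ⊆ U}`. -/
def RoughT {U : Type*} (R : Setoid U) : Set (Set U × Set U) :=
  {p | ∃ X : Set U, p = RS R X}

/-- Componentwise inclusion order on approximation pairs. -/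
def rle {U : Type*} (p q : Set U × Set U) : Prop :=
  p.1 ⊆ q.1 ∧ p.2 ⊆ q.2

/-- Componentwise intersection (the meet `∇` on approximation pairs). -/
def pmeet {U : Type*} (p q : Set U × Set U) : Set U × Set U :=
  (p.1 ∩ q.1, p.2 ∩ q.2)

/-- Componentwise union (the join `Δ` on approximation pairs). -/
def pjoin {U : Type*} (p q : Set U × Set U) : Set U × Set U :=
  (p.1 ∪ q.1, p.2 ∪ q.2)

/-- `RS(W)` is the relative pseudocomplement of `RS(X)` with respect to `RS(Y)`. -/
def IsRelPC {U : Type*} (R : Setoid U) (X Y W : Set U) : Prop :=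
  lowerApprox R W ∩ lowerApprox R X ⊆ lowerApprox R Y ∧
  upperApprox R W ∩ upperApprox R X ⊆ upperApprox R Y ∧
  ∀ K : Set U, lowerApprox R K ∩ lowerApprox R X ⊆ lowerApprox R Y →
    upperApprox R K ∩ upperApprox R X ⊆ upperApprox R Y →
    lowerApprox R K ⊆ lowerApprox R W ∧ upperApprox R K ⊆ upperApprox R W

/-- `RS(V)` is the dual relative pseudocomplement of `RS(X)` with respect to `RS(Y)`. -/
def IsDualRelPC {U : Type*} (R : Setoid U) (X Y V : Set U) : Prop :=
  lowerApprox R X ⊆ lowerApprox R Y ∪ lowerApprox R V ∧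
  upperApprox R X ⊆ upperApprox R Y ∪ upperApprox R V ∧
  ∀ K : Set U, lowerApprox R X ⊆ lowerApprox R Y ∪ lowerApprox R K →
    upperApprox R X ⊆ upperApprox R Y ∪ upperApprox R K →
    lowerApprox R V ⊆ lowerApprox R K ∧ upperApprox R V ⊆ upperApprox R K


section Aux
variable {U : Type*} (R : Setoid U)

lemma class_eq {x y : U} (h : R.r x y) : {z | R.r x z} = {z | R.r y z} := by
  ext z
  exact ⟨fun hz => R.trans (R.symm h) hz, fun hz => R.trans h hz⟩

lemma lower_sat {X : Set U} {x y : U} (hx : x ∈ lowerApprox R X) (h : R.r x y) :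
    y ∈ lowerApprox R X := by
  simpa [lowerApprox, class_eq R h] using hx

lemma upper_sat {X : Set U} {x y : U} (hx : x ∈ upperApprox R X) (h : R.r x y) :
    y ∈ upperApprox R X := by
  simpa [upperApprox, class_eq R h] using hx

end Aux

theorem rough_meet_glb {U : Type*} [Fintype U] [Nonempty U] (R : Setoid U)
    (X Y : Set U) :
    (∃ Z : Set U, lowerApprox R Z = lowerApprox R X ∩ lowerApprox R Y ∧
      upperApprox R Z = upperApprox R X ∩ upperApprox R Y) ∧
    (lowerApprox R X ∩ lowerApprox R Y, upperApprox R X ∩ upperApprox R Y) ∈ RoughT R ∧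
    rle (lowerApprox R X ∩ lowerApprox R Y, upperApprox R X ∩ upperApprox R Y) (RS R X) ∧
    rle (lowerApprox R X ∩ lowerApprox R Y, upperApprox R X ∩ upperApprox R Y) (RS R Y) ∧
    ∀ q ∈ RoughT R, rle q (RS R X) → rle q (RS R Y) →
      rle q (lowerApprox R X ∩ lowerApprox R Y, upperApprox R X ∩ upperApprox R Y) := by
  classical
  set A := lowerApprox R X ∩ lowerApprox R Y with hA
  set B := upperApprox R X ∩ upperApprox R Y with hB
  have hAsat : ∀ {x y : U}, x ∈ A → R.r x y → y ∈ A := by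
    intro x y hx h
    exact ⟨lower_sat R hx.1 h, lower_sat R hx.2 h⟩
  have hBsat : ∀ {x y : U}, x ∈ B → R.r x y → y ∈ B := by
    intro x y hx h
    exact ⟨upper_sat R hx.1 h, upper_sat R hx.2 h⟩
  have hAB : A ⊆ B := by
    intro x hx
    constructor <;> [skip; skip] <;>
    · simp only [upperApprox, Set.mem_setOf_eq]
      intro hempty
      have : x ∈ ({y | R.r x y} : Set U) := R.refl x
      first
        | exact absurd (Set.eq_empty_iff_forall_notMem.mp hempty x ⟨this, hx.1 this⟩) (fun h => h)
        | exact absurd (Set.eq_empty_iff_forall_notMem.mp hempty x ⟨this, hx.2 this⟩) (fun h => h)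
  -- representative function
  let rep : U → U := fun x => (Quotient.mk R x).out
  have hrep_rel : ∀ x, R.r x (rep x) := fun x => R.symm (Quotient.mk_out x)
  have hrep_eq : ∀ {x y : U}, R.r x y → rep x = rep y := by
    intro x y h
    simp only [rep, Quotient.sound h]
  set Z : Set U := A ∪ {x | x ∈ B ∧ x ≠ rep x} with hZ
  have hlowZ : lowerApprox R Z = A := by
    apply Set.Subset.antisymm
    · intro x hx
      have hxZ : x ∈ Z := hx (R.refl x)
      rcases hxZ with hxA | ⟨hxB, hxne⟩
      · exact hxA
      · -- rep x ∈ class of x ⊆ Z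
        have hrZ : rep x ∈ Z := hx (hrep_rel x)
        rcases hrZ with hrA | ⟨_, hrne⟩
        · exact hAsat hrA (R.symm (hrep_rel x))
        · exact absurd (hrep_eq (R.symm (hrep_rel x))) (fun h => hrne h.symm)
    · intro x hx y hy
      exact Or.inl (hAsat hx hy)
  have huppZ : upperApprox R Z = B := by
    apply Set.Subset.antisymm
    · intro x hx
      rw [upperApprox, Set.mem_setOf_eq, ← Set.nonempty_iff_ne_empty] at hx
      obtain ⟨y, hy1, hy2⟩ := hx
      rcases hy2 with hyA | ⟨hyB, _⟩
      · exact hBsat (hAB hyA) (R.symm hy1)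
      · exact hBsat hyB (R.symm hy1)
    · intro x hx
      by_cases hxA : x ∈ A
      · rw [upperApprox, Set.mem_setOf_eq, ← Set.nonempty_iff_ne_empty]
        exact ⟨x, R.refl x, Or.inl hxA⟩
      · -- class of x has two distinct elements
        obtain ⟨u, hu1, hu2⟩ : ∃ u, R.r x u ∧ u ∈ X := by
          have := hx.1
          rw [upperApprox, Set.mem_setOf_eq, ← Set.nonempty_iff_ne_empty] at this
          obtain ⟨u, h1, h2⟩ := this; exact ⟨u, h1, h2⟩
        obtain ⟨v, hv1, hv2⟩ : ∃ v, R.r x v ∧ v ∈ Y := by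
          have := hx.2
          rw [upperApprox, Set.mem_setOf_eq, ← Set.nonempty_iff_ne_empty] at this
          obtain ⟨v, h1, h2⟩ := this; exact ⟨v, h1, h2⟩
        have hnot : ¬ (x ∈ lowerApprox R X) ∨ ¬ (x ∈ lowerApprox R Y) := by
          by_contra h
          push_neg at h
          exact hxA ⟨h.1, h.2⟩
        obtain ⟨a, b, hab, hra, hrb⟩ : ∃ a b, a ≠ b ∧ R.r x a ∧ R.r x b := by
          rcases hnot with h | h
          · rw [lowerApprox, Set.mem_setOf_eq, Set.not_subset] at h
            obtain ⟨w, hw1, hw2⟩ := h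
            exact ⟨u, w, fun he => hw2 (he ▸ hu2), hu1, hw1⟩
          · rw [lowerApprox, Set.mem_setOf_eq, Set.not_subset] at h
            obtain ⟨w, hw1, hw2⟩ := h
            exact ⟨v, w, fun he => hw2 (he ▸ hv2), hv1, hw1⟩
        have hgood : ∃ y, R.r x y ∧ y ≠ rep x := by
          by_cases ha : a = rep x
          · exact ⟨b, hrb, fun h => hab (ha.trans h.symm)⟩
          · exact ⟨a, hra, ha⟩
        obtain ⟨y, hy1, hy2⟩ := hgood
        rw [upperApprox, Set.mem_setOf_eq, ← Set.nonempty_iff_ne_empty]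
        refine ⟨y, hy1, Or.inr ⟨hBsat hx hy1, ?_⟩⟩
        rwa [← hrep_eq hy1]
  refine ⟨⟨Z, hlowZ, huppZ⟩, ⟨Z, by simp [RS, hlowZ, huppZ]⟩, ?_, ?_, ?_⟩
  · exact ⟨Set.inter_subset_left, Set.inter_subset_left⟩
  · exact ⟨Set.inter_subset_right, Set.inter_subset_right⟩
  · rintro q ⟨K, rfl⟩ h1 h2
    exact ⟨Set.subset_inter h1.1 h2.1, Set.subset_inter h1.2 h2.2⟩
end

section
/- For every X ⊆ U, let X* := U \ R⁻(X). Then R₋(X*) = R⁻(X*) = X*, the meet of RS(X) and RS(X*) is (∅,∅) (i.e. R₋(X) ∩ R₋(X*) = ∅ and R⁻(X) ∩ R⁻(X*) = ∅), and RS(X*) is the greatest element of T whose meet with RS(X) is (∅,∅): for every Y ⊆ U with R₋(X) ∩ R₋(Y) = ∅ and R⁻(X) ∩ R⁻(Y) = ∅, one has R₋(Y) ⊆ X* and R⁻(Y) ⊆ X*. Hence every element of T has a (unique) pseudocomplement, namely RS(X)* = RS(U \ R⁻(X)). -/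
lemma mem_upper_iff {U : Type*} (R : Setoid U) (X : Set U) (x : U) :
    x ∈ upperApprox R X ↔ ∃ y, R.r x y ∧ y ∈ X := by
  simp [upperApprox, Set.eq_empty_iff_forall_notMem, Set.mem_inter_iff]

lemma upper_saturated {U : Type*} (R : Setoid U) (X : Set U) {x x' : U}
    (h : R.r x x') (hx : x ∈ upperApprox R X) : x' ∈ upperApprox R X := by
  rw [mem_upper_iff] at hx ⊢
  obtain ⟨y, hy, hyX⟩ := hx
  exact ⟨y, R.trans (R.symm h) hy, hyX⟩

lemma lower_subset_self {U : Type*} (R : Setoid U) (X : Set U) :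
    lowerApprox R X ⊆ X := fun x hx => hx (R.refl x)

lemma lower_subset_upper {U : Type*} (R : Setoid U) (X : Set U) :
    lowerApprox R X ⊆ upperApprox R X := fun x hx => by
  rw [mem_upper_iff]; exact ⟨x, R.refl x, lower_subset_self R X hx⟩

lemma self_subset_upper {U : Type*} (R : Setoid U) (X : Set U) :
    X ⊆ upperApprox R X := fun x hx => by
  rw [mem_upper_iff]; exact ⟨x, R.refl x, hx⟩

theorem rough_pseudocomplement {U : Type*} [Fintype U] [Nonempty U] (R : Setoid U)
    (X : Set U) :
    lowerApprox R (upperApprox R X)ᶜ = (upperApprox R X)ᶜ ∧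
    upperApprox R (upperApprox R X)ᶜ = (upperApprox R X)ᶜ ∧
    lowerApprox R X ∩ lowerApprox R (upperApprox R X)ᶜ = ∅ ∧
    upperApprox R X ∩ upperApprox R (upperApprox R X)ᶜ = ∅ ∧
    ∀ Y : Set U, lowerApprox R X ∩ lowerApprox R Y = ∅ →
      upperApprox R X ∩ upperApprox R Y = ∅ →
      lowerApprox R Y ⊆ (upperApprox R X)ᶜ ∧ upperApprox R Y ⊆ (upperApprox R X)ᶜ := by
  have hsat : ∀ x x' : U, R.r x x' → x ∈ (upperApprox R X)ᶜ → x' ∈ (upperApprox R X)ᶜ := by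
    intro x x' h hx hx'
    exact hx (upper_saturated R X (R.symm h) hx')
  have h1 : lowerApprox R (upperApprox R X)ᶜ = (upperApprox R X)ᶜ := by
    apply Set.Subset.antisymm (lower_subset_self R _)
    intro x hx y hy
    exact hsat x y hy hx
  have h2 : upperApprox R (upperApprox R X)ᶜ = (upperApprox R X)ᶜ := by
    apply Set.Subset.antisymm _ (self_subset_upper R _)
    intro x hx
    rw [mem_upper_iff] at hx
    obtain ⟨y, hy, hyc⟩ := hx
    exact hsat y x (R.symm hy) hyc
  refine ⟨h1, h2, ?_, ?_, ?_⟩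
  · rw [h1, Set.eq_empty_iff_forall_notMem]
    intro x ⟨hx1, hx2⟩
    exact hx2 (lower_subset_upper R X hx1)
  · rw [h2, Set.eq_empty_iff_forall_notMem]
    intro x ⟨hx1, hx2⟩
    exact hx2 hx1
  · intro Y _ hup
    have hYsub : upperApprox R Y ⊆ (upperApprox R X)ᶜ := by
      intro x hx hx'
      exact (Set.eq_empty_iff_forall_notMem.mp hup) x ⟨hx', hx⟩
    exact ⟨(lower_subset_upper R Y).trans hYsub, hYsub⟩
end

section
/- (Rough Heyting algebra) For every pair of subsets Y, Z of U there exists W ⊆ U such that R₋(W) ∩ R₋(Y) ⊆ R₋(Z) and R⁻(W) ∩ R⁻(Y) ⊆ R⁻(Z), and RS(W) is the greatest such element of T: for every K ⊆ U with R₋(K) ∩ R₋(Y) ⊆ R₋(Z) and R⁻(K) ∩ R⁻(Y) ⊆ R⁻(Z), one has R₋(K) ⊆ R₋(W) and R⁻(K) ⊆ R⁻(W). Hence every pair of elements of T has a (unique) relative pseudocomplement. -/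
theorem rough_heyting {U : Type*} [Fintype U] [Nonempty U] (R : Setoid U)
    (Y Z : Set U) :
    ∃ W : Set U,
      lowerApprox R W ∩ lowerApprox R Y ⊆ lowerApprox R Z ∧
      upperApprox R W ∩ upperApprox R Y ⊆ upperApprox R Z ∧
      ∀ K : Set U, lowerApprox R K ∩ lowerApprox R Y ⊆ lowerApprox R Z →
        upperApprox R K ∩ upperApprox R Y ⊆ upperApprox R Z →
        lowerApprox R K ⊆ lowerApprox R W ∧ upperApprox R K ⊆ upperApprox R W := by
  classical
  have cls_eq : ∀ x y : U, R.r x y → {z | R.r x z} = {z | R.r y z} := by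
    intro x y hxy
    ext z
    exact ⟨fun h => R.trans (R.symm hxy) h, fun h => R.trans hxy h⟩
  refine ⟨{x | ({y | R.r x y} ∩ Y ≠ ∅ → {y | R.r x y} ∩ Z ≠ ∅) ∧
      ({y | R.r x y} ⊆ Y → x ∈ Z)}, ?_, ?_, ?_⟩
  · -- lower condition
    rintro x ⟨hW, hY⟩
    intro y hy
    have hyW : y ∈ {x | ({y | R.r x y} ∩ Y ≠ ∅ → {y | R.r x y} ∩ Z ≠ ∅) ∧
        ({y | R.r x y} ⊆ Y → x ∈ Z)} := hW hy
    have hcls : {z | R.r y z} = {z | R.r x z} := (cls_eq x y hy).symm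
    exact hyW.2 (hcls ▸ hY)
  · -- upper condition
    rintro x ⟨hW, hY⟩
    obtain ⟨w, hwx, hw1, _⟩ := Set.nonempty_iff_ne_empty.2 hW
    have hcls : {z | R.r w z} = {z | R.r x z} := (cls_eq x w hwx).symm
    have : {z | R.r w z} ∩ Y ≠ ∅ := by rw [hcls]; exact hY
    have := hw1 this
    rwa [hcls] at this
  · -- maximality
    intro K hKl hKu
    constructor
    · intro x hx y hy
      have hyK : {z | R.r y z} ⊆ K := fun z hz => hx (R.trans hy hz)
      constructor
      · intro hyY
        have hyUK : y ∈ upperApprox R K := by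
          simp only [upperApprox, Set.mem_setOf_eq]
          intro h
          have : y ∈ ({z | R.r y z} ∩ K) := ⟨R.refl y, hyK (R.refl y)⟩
          rw [h] at this; exact this
        exact hKu ⟨hyUK, hyY⟩
      · intro hyY
        have : y ∈ lowerApprox R Z := hKl ⟨hyK, hyY⟩
        exact this (R.refl y)
    · intro x hx
      by_cases hY : {z | R.r x z} ∩ Y = ∅
      · -- x itself is in W
        intro h
        have : x ∈ ({z | R.r x z} ∩ {x | ({y | R.r x y} ∩ Y ≠ ∅ → {y | R.r x y} ∩ Z ≠ ∅) ∧ ({y | R.r x y} ⊆ Y → x ∈ Z)}) := by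
          refine ⟨R.refl x, ?_, ?_⟩
          · intro h'; exact absurd hY h'
          · intro hsub
            exfalso
            have : x ∈ ({z | R.r x z} ∩ Y) := ⟨R.refl x, hsub (R.refl x)⟩
            rw [hY] at this; exact this
        rw [h] at this; exact this
      · have hxZ : {z | R.r x z} ∩ Z ≠ ∅ := hKu ⟨hx, hY⟩
        obtain ⟨z, hzx, hzZ⟩ := Set.nonempty_iff_ne_empty.2 hxZ
        intro h
        have hcls : {w | R.r z w} = {w | R.r x w} := (cls_eq x z hzx).symm
        have : z ∈ ({w | R.r x w} ∩ {x | ({y | R.r x y} ∩ Y ≠ ∅ → {y | R.r x y} ∩ Z ≠ ∅) ∧ ({y | R.r x y} ⊆ Y → x ∈ Z)}) := by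
          refine ⟨hzx, ?_, fun _ => hzZ⟩
          intro _
          rw [hcls]; exact hxZ
        rw [h] at this; exact this
end

section
/- For every X ⊆ U, let X⁺ := U \ R₋(X). Then R₋(X⁺) = R⁻(X⁺) = X⁺, the join of RS(X) and RS(X⁺) is (U,U) (i.e. R₋(X) ∪ R₋(X⁺) = U and R⁻(X) ∪ R⁻(X⁺) = U), and RS(X⁺) is the least element of T whose join with RS(X) is (U,U): for every Y ⊆ U with R₋(X) ∪ R₋(Y) = U and R⁻(X) ∪ R⁻(Y) = U, one has X⁺ ⊆ R₋(Y) and X⁺ ⊆ R⁻(Y). Hence every element of T has a (unique) dual pseudocomplement, namely RS(X)⁺ = RS(U \ R₋(X)). -/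
lemma lower_saturated {U : Type*} (R : Setoid U) (X : Set U) {x y : U}
    (hx : x ∈ lowerApprox R X) (hxy : R.r x y) : y ∈ lowerApprox R X := by
  intro z hz
  exact hx (R.trans hxy hz)

theorem rough_dual_pseudocomplement {U : Type*} [Fintype U] [Nonempty U] (R : Setoid U)
    (X : Set U) :
    lowerApprox R (lowerApprox R X)ᶜ = (lowerApprox R X)ᶜ ∧
    upperApprox R (lowerApprox R X)ᶜ = (lowerApprox R X)ᶜ ∧
    lowerApprox R X ∪ lowerApprox R (lowerApprox R X)ᶜ = Set.univ ∧
    upperApprox R X ∪ upperApprox R (lowerApprox R X)ᶜ = Set.univ ∧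
    ∀ Y : Set U, lowerApprox R X ∪ lowerApprox R Y = Set.univ →
      upperApprox R X ∪ upperApprox R Y = Set.univ →
      (lowerApprox R X)ᶜ ⊆ lowerApprox R Y ∧ (lowerApprox R X)ᶜ ⊆ upperApprox R Y := by
  have hlow : lowerApprox R (lowerApprox R X)ᶜ = (lowerApprox R X)ᶜ := by
    apply Set.Subset.antisymm
    · intro x hx
      exact hx (R.refl x)
    · intro x hx z hz
      intro hcon
      exact hx (lower_saturated R X hcon (R.symm hz))
  have hup : upperApprox R (lowerApprox R X)ᶜ = (lowerApprox R X)ᶜ := by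
    apply Set.Subset.antisymm
    · intro x hx
      obtain ⟨z, hz1, hz2⟩ := Set.nonempty_iff_ne_empty.mpr hx
      intro hcon
      exact hz2 (lower_saturated R X hcon hz1)
    · intro x hx
      exact lower_subset_upper R _ (by rwa [hlow])
  refine ⟨hlow, hup, ?_, ?_, ?_⟩
  · rw [hlow]
    exact Set.union_compl_self _
  · rw [hup]
    apply Set.eq_univ_of_forall
    intro x
    by_cases h : x ∈ lowerApprox R X
    · exact Or.inl (lower_subset_upper R X h)
    · exact Or.inr h
  · intro Y h1 _
    have hsub : (lowerApprox R X)ᶜ ⊆ lowerApprox R Y := by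
      intro x hx
      rcases (h1 ▸ Set.mem_univ x : x ∈ lowerApprox R X ∪ lowerApprox R Y) with h | h
      · exact absurd h hx
      · exact h
    exact ⟨hsub, hsub.trans (lower_subset_upper R Y)⟩
end

section
/- (dual Rough Stone algebra) For every X ⊆ U, with X⁺ := U \ R₋(X) and X⁺⁺ := U \ R₋(X⁺) (which equals R₋(X)), the meet of RS(X⁺) and RS(X⁺⁺) is (∅,∅): R₋(X⁺) ∩ R₋(X⁺⁺) = ∅ and R⁻(X⁺) ∩ R⁻(X⁺⁺) = ∅. -/
/-- A set is saturated if it is a union of equivalence classes. -/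
def Saturated {U : Type*} (R : Setoid U) (S : Set U) : Prop :=
  ∀ x y, R.r x y → x ∈ S → y ∈ S

lemma lowerApprox_saturated {U : Type*} (R : Setoid U) (X : Set U) :
    Saturated R (lowerApprox R X) := by
  intro x y hxy hx z hz
  exact hx (R.trans hxy hz)

lemma Saturated.compl {U : Type*} {R : Setoid U} {S : Set U}
    (h : Saturated R S) : Saturated R Sᶜ := by
  intro x y hxy hx hy
  exact hx (h y x (R.symm hxy) hy)

lemma lowerApprox_of_saturated {U : Type*} {R : Setoid U} {S : Set U}
    (h : Saturated R S) : lowerApprox R S = S := by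
  ext x
  constructor
  · intro hx; exact hx (R.refl x)
  · intro hx y hy; exact h x y hy hx

lemma upperApprox_of_saturated {U : Type*} {R : Setoid U} {S : Set U}
    (h : Saturated R S) : upperApprox R S = S := by
  ext x
  constructor
  · intro hx
    rcases Set.nonempty_iff_ne_empty.2 hx with ⟨y, hy1, hy2⟩
    exact h y x (R.symm hy1) hy2
  · intro hx
    apply Set.nonempty_iff_ne_empty.1
    exact ⟨x, R.refl x, hx⟩

theorem rough_dual_stone {U : Type*} [Fintype U] [Nonempty U] (R : Setoid U)
    (X : Set U) :
    (lowerApprox R (lowerApprox R X)ᶜ)ᶜ = lowerApprox R X ∧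
    lowerApprox R (lowerApprox R X)ᶜ ∩
      lowerApprox R (lowerApprox R (lowerApprox R X)ᶜ)ᶜ = ∅ ∧
    upperApprox R (lowerApprox R X)ᶜ ∩
      upperApprox R (lowerApprox R (lowerApprox R X)ᶜ)ᶜ = ∅ := by
  have hL : Saturated R (lowerApprox R X) := lowerApprox_saturated R X
  have hLc : Saturated R (lowerApprox R X)ᶜ := hL.compl
  have h1 : lowerApprox R (lowerApprox R X)ᶜ = (lowerApprox R X)ᶜ :=
    lowerApprox_of_saturated hLc
  refine ⟨by rw [h1, compl_compl], ?_, ?_⟩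
  · rw [h1, compl_compl, lowerApprox_of_saturated hL]
    exact Set.compl_inter_self _
  · rw [h1, compl_compl, upperApprox_of_saturated hLc, upperApprox_of_saturated hL]
    exact Set.compl_inter_self _
end

section
/- (Rough bi-Heyting algebra) The set T, ordered componentwise by inclusion, is a bounded distributive lattice with least element (∅,∅) and greatest element (U,U), whose meet and join are the componentwise intersection and componentwise union of the approximation pairs, and in which every pair of elements possesses both a relative pseudocomplement (a greatest element whose meet with the first is below the second) and a dual relative pseudocomplement (a least element whose join with the second is above the first). -/
section Aux
variable {U : Type*} (R : Setoid U)

/-- `A` is saturated (union of equivalence classes). -/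
def Sat (A : Set U) : Prop := ∀ ⦃x y : U⦄, R.r x y → x ∈ A → y ∈ A

/-- Characterization of members of `RoughT`. -/
def Good (p : Set U × Set U) : Prop :=
  Sat R p.1 ∧ Sat R p.2 ∧ p.1 ⊆ p.2 ∧
  ∀ x, x ∈ p.2 → x ∉ p.1 → ∃ y, R.r x y ∧ y ≠ x

variable {R}

lemma mem_lower {X : Set U} {x : U} :
    x ∈ lowerApprox R X ↔ ∀ y, R.r x y → y ∈ X := Iff.rfl

lemma mem_upper {X : Set U} {x : U} :
    x ∈ upperApprox R X ↔ ∃ y, R.r x y ∧ y ∈ X := by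
  simp only [upperApprox, Set.mem_setOf_eq, ← Set.nonempty_iff_ne_empty]
  constructor
  · rintro ⟨y, hy, hyX⟩; exact ⟨y, hy, hyX⟩
  · rintro ⟨y, hy, hyX⟩; exact ⟨y, hy, hyX⟩

noncomputable def rep (R : Setoid U) (x : U) : U := (Quotient.mk R x).out

lemma rep_rel (x : U) : R.r x (rep R x) :=
  R.iseqv.symm (Quotient.exact ((Quotient.mk R x).out_eq))

lemma rep_congr {x y : U} (h : R.r x y) : rep R x = rep R y :=
  congrArg Quotient.out (Quotient.sound h)

lemma good_RS (X : Set U) : Good R (RS R X) := by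
  refine ⟨?_, ?_, ?_, ?_⟩
  · intro x y hxy hx z hz
    exact hx (R.iseqv.trans hxy hz)
  · intro x y hxy hx
    rw [RS] at *
    rw [mem_upper] at hx ⊢
    obtain ⟨z, hz, hzX⟩ := hx
    exact ⟨z, R.iseqv.trans (R.iseqv.symm hxy) hz, hzX⟩
  · intro x hx
    rw [RS] at *
    rw [mem_upper]
    exact ⟨x, R.iseqv.refl x, hx (R.iseqv.refl x)⟩
  · intro x hx hnx
    rw [RS] at hx hnx
    simp only at hx hnx
    rw [mem_upper] at hx
    obtain ⟨z, hz, hzX⟩ := hx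
    rw [mem_lower] at hnx
    push_neg at hnx
    obtain ⟨w, hw, hwX⟩ := hnx
    by_cases hzx : z = x
    · exact ⟨w, hw, fun h => hwX (h ▸ hzx ▸ hzX)⟩
    · exact ⟨z, hz, hzx⟩

lemma good_mem {p : Set U × Set U} (h : Good R p) : p ∈ RoughT R := by
  obtain ⟨h1, h2, h12, hsing⟩ := h
  classical
  refine ⟨p.1 ∪ {x | x ∈ p.2 ∧ x ∉ p.1 ∧ rep R x = x}, ?_⟩
  symm
  have hX : ∀ x, x ∈ p.1 ∪ {x | x ∈ p.2 ∧ x ∉ p.1 ∧ rep R x = x} → x ∈ p.2 := by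
    rintro x (hx | ⟨hx, _, _⟩)
    · exact h12 hx
    · exact hx
  rw [Prod.ext_iff]
  constructor <;> ext x
  · simp only [RS, mem_lower]
    constructor
    · intro hx
      by_contra hnx
      have hxmem : x ∈ p.1 ∪ _ := hx x (R.iseqv.refl x)
      rcases hxmem with h | ⟨hx2, _, hrep⟩
      · exact hnx h
      · obtain ⟨y, hxy, hyx⟩ := hsing x hx2 hnx
        have hy := hx y hxy
        rcases hy with hy | ⟨_, _, hyrep⟩
        · exact hnx (h1 (R.iseqv.symm hxy) hy)
        · exact hyx (hyrep ▸ (rep_congr hxy) ▸ hrep)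
    · intro hx y hxy
      exact Or.inl (h1 hxy hx)
  · simp only [RS, mem_upper]
    constructor
    · rintro ⟨y, hxy, hy⟩
      exact h2 (R.iseqv.symm hxy) (hX y hy)
    · intro hx
      by_cases hx1 : x ∈ p.1
      · exact ⟨x, R.iseqv.refl x, Or.inl hx1⟩
      · refine ⟨rep R x, rep_rel x, Or.inr ⟨h2 (rep_rel x) hx, ?_, ?_⟩⟩
        · intro hrep1
          exact hx1 (h1 (R.iseqv.symm (rep_rel x)) hrep1)
        · exact (rep_congr (rep_rel x)).symm

lemma mem_good {p : Set U × Set U} (h : p ∈ RoughT R) : Good R p := by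
  obtain ⟨X, rfl⟩ := h
  exact good_RS X


lemma Sat.inter {A B : Set U} (hA : Sat R A) (hB : Sat R B) : Sat R (A ∩ B) :=
  fun _ _ h hx => ⟨hA h hx.1, hB h hx.2⟩

lemma Sat.union {A B : Set U} (hA : Sat R A) (hB : Sat R B) : Sat R (A ∪ B) :=
  fun _ _ h hx => hx.elim (fun hx => Or.inl (hA h hx)) (fun hx => Or.inr (hB h hx))

lemma Sat.compl {A : Set U} (hA : Sat R A) : Sat R Aᶜ :=
  fun x y h hx hy => hx (hA (R.iseqv.symm h) hy)

lemma Sat.diff {A B : Set U} (hA : Sat R A) (hB : Sat R B) : Sat R (A \ B) :=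
  hA.inter hB.compl

end Aux
theorem rough_biHeyting {U : Type*} [Fintype U] [Nonempty U] (R : Setoid U) :
    ((∅, ∅) : Set U × Set U) ∈ RoughT R ∧
    ((Set.univ, Set.univ) : Set U × Set U) ∈ RoughT R ∧
    (∀ p ∈ RoughT R, rle ((∅, ∅) : Set U × Set U) p) ∧
    (∀ p ∈ RoughT R, rle p ((Set.univ, Set.univ) : Set U × Set U)) ∧
    (∀ p ∈ RoughT R, ∀ q ∈ RoughT R, pmeet p q ∈ RoughT R) ∧
    (∀ p ∈ RoughT R, ∀ q ∈ RoughT R, pjoin p q ∈ RoughT R) ∧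
    (∀ p ∈ RoughT R, ∀ q ∈ RoughT R, rle (pmeet p q) p ∧ rle (pmeet p q) q ∧
      ∀ k ∈ RoughT R, rle k p → rle k q → rle k (pmeet p q)) ∧
    (∀ p ∈ RoughT R, ∀ q ∈ RoughT R, rle p (pjoin p q) ∧ rle q (pjoin p q) ∧
      ∀ k ∈ RoughT R, rle p k → rle q k → rle (pjoin p q) k) ∧
    (∀ p q r : Set U × Set U, pmeet p (pjoin q r) = pjoin (pmeet p q) (pmeet p r)) ∧
    (∀ p ∈ RoughT R, ∀ q ∈ RoughT R, ∃ w ∈ RoughT R,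
      rle (pmeet w p) q ∧ ∀ k ∈ RoughT R, rle (pmeet k p) q → rle k w) ∧
    (∀ p ∈ RoughT R, ∀ q ∈ RoughT R, ∃ v ∈ RoughT R,
      rle p (pjoin q v) ∧ ∀ k ∈ RoughT R, rle p (pjoin q k) → rle v k) := by
  refine ⟨?_, ?_, ?_, ?_, ?_, ?_, ?_, ?_, ?_, ?_, ?_⟩
  · -- bottom in T
    refine good_mem ⟨?_, ?_, ?_, ?_⟩ <;> simp [Sat]
  · -- top in T
    refine good_mem ⟨?_, ?_, ?_, ?_⟩ <;> simp [Sat]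
  · intro p _; exact ⟨Set.empty_subset _, Set.empty_subset _⟩
  · intro p _; exact ⟨Set.subset_univ _, Set.subset_univ _⟩
  · -- meet closure
    intro p hp q hq
    obtain ⟨p1, p2, p12, ps⟩ := mem_good hp
    obtain ⟨q1, q2, q12, qs⟩ := mem_good hq
    refine good_mem ⟨p1.inter q1, p2.inter q2,
      Set.inter_subset_inter p12 q12, ?_⟩
    intro x hx hnx
    simp only [pmeet, Set.mem_inter_iff, not_and_or] at hx hnx
    rcases hnx with h | h
    · exact ps x hx.1 h
    · exact qs x hx.2 h
  · -- join closure
    intro p hp q hq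
    obtain ⟨p1, p2, p12, ps⟩ := mem_good hp
    obtain ⟨q1, q2, q12, qs⟩ := mem_good hq
    refine good_mem ⟨p1.union q1, p2.union q2,
      Set.union_subset_union p12 q12, ?_⟩
    intro x hx hnx
    simp only [pjoin, Set.mem_union, not_or] at hx hnx
    rcases hx with h | h
    · exact ps x h hnx.1
    · exact qs x h hnx.2
  · -- meet is inf
    intro p _ q _
    exact ⟨⟨Set.inter_subset_left, Set.inter_subset_left⟩,
      ⟨Set.inter_subset_right, Set.inter_subset_right⟩,
      fun k _ hkp hkq => ⟨Set.subset_inter hkp.1 hkq.1, Set.subset_inter hkp.2 hkq.2⟩⟩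
  · -- join is sup
    intro p _ q _
    exact ⟨⟨Set.subset_union_left, Set.subset_union_left⟩,
      ⟨Set.subset_union_right, Set.subset_union_right⟩,
      fun k _ hpk hqk => ⟨Set.union_subset hpk.1 hqk.1, Set.union_subset hpk.2 hqk.2⟩⟩
  · -- distributivity
    intro p q r
    refine Prod.ext ?_ ?_ <;> exact Set.inter_union_distrib_left ..
  · -- Heyting implication
    intro p hp q hq
    obtain ⟨p1, p2, p12, ps⟩ := mem_good hp
    obtain ⟨q1, q2, q12, qs⟩ := mem_good hq
    set A : Set U := (p.1ᶜ ∪ q.1) ∩ (p.2ᶜ ∪ q.2) with hA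
    refine ⟨(A, A ∪ q.2), good_mem ⟨(p1.compl.union q1).inter (p2.compl.union q2),
      ((p1.compl.union q1).inter (p2.compl.union q2)).union q2,
      Set.subset_union_left, ?_⟩, ⟨?_, ?_⟩, ?_⟩
    · -- singleton condition for w
      intro x hx hnx
      rcases hx with hx | hx
      · exact absurd hx hnx
      · -- x ∈ q.2, x ∉ A
        rw [hA, Set.mem_inter_iff, not_and_or] at hnx
        rcases hnx with h | h
        · rw [Set.mem_union, not_or, Set.notMem_compl_iff] at h
          have : x ∉ q.1 := h.2
          exact qs x hx this
        · rw [Set.mem_union, not_or] at h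
          exact absurd hx h.2
    · -- A ∩ p.1 ⊆ q.1
      rintro x ⟨hxA, hxp⟩
      rcases hxA.1 with h | h
      · exact absurd hxp h
      · exact h
    · -- (A ∪ q.2) ∩ p.2 ⊆ q.2
      rintro x ⟨hxA, hxp⟩
      rcases hxA with hxA | hxq
      · rcases hxA.2 with h | h
        · exact absurd hxp h
        · exact h
      · exact hxq
    · -- maximality
      intro k hk hkle
      obtain ⟨k1, k2, k12, _⟩ := mem_good hk
      constructor
      · intro x hx
        refine ⟨?_, ?_⟩
        · by_cases h : x ∈ p.1
          · exact Or.inr (hkle.1 ⟨hx, h⟩)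
          · exact Or.inl h
        · by_cases h : x ∈ p.2
          · exact Or.inr (hkle.2 ⟨k12 hx, h⟩)
          · exact Or.inl h
      · intro x hx
        by_cases h : x ∈ p.2
        · exact Or.inr (hkle.2 ⟨hx, h⟩)
        · refine Or.inl ⟨Or.inl fun hx1 => h (p12 hx1), Or.inl h⟩
  · -- dual relative pseudocomplement
    intro p hp q hq
    obtain ⟨p1, p2, p12, ps⟩ := mem_good hp
    obtain ⟨q1, q2, q12, qs⟩ := mem_good hq
    refine ⟨(p.1 \ q.1, (p.1 \ q.1) ∪ (p.2 \ q.2)),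
      good_mem ⟨p1.diff q1, (p1.diff q1).union (p2.diff q2),
        Set.subset_union_left, ?_⟩, ⟨?_, ?_⟩, ?_⟩
    · -- singleton condition for v
      intro x hx hnx
      rcases hx with hx | hx
      · exact absurd hx hnx
      · rw [Set.mem_diff, not_and_or, not_not] at hnx
        rcases hnx with h | h
        · exact ps x hx.1 h
        · exact absurd (q12 h) hx.2
    · -- p.1 ⊆ q.1 ∪ (p.1 \ q.1)
      intro x hx
      by_cases h : x ∈ q.1
      · exact Or.inl h
      · exact Or.inr ⟨hx, h⟩
    · intro x hx
      by_cases h : x ∈ q.2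
      · exact Or.inl h
      · exact Or.inr (Or.inr ⟨hx, h⟩)
    · -- minimality
      intro k hk hkle
      obtain ⟨k1, k2, k12, _⟩ := mem_good hk
      constructor
      · rintro x ⟨hx1, hx2⟩
        rcases hkle.1 hx1 with h | h
        · exact absurd h hx2
        · exact h
      · rintro x (⟨hx1, hx2⟩ | ⟨hx1, hx2⟩)
        · rcases hkle.1 hx1 with h | h
          · exact absurd h hx2
          · exact k12 h
        · rcases hkle.2 hx1 with h | h
          · exact absurd h hx2
          · exact h
end
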